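/- If w ∈ S_n is identified with its image ι(w) ∈ S_{n+1} under the standard inclusion (fixing n+1), then the Schubert polynomials agree: 𝔖_w = 𝔖_{ι(w)}. Consequently Schubert polynomials are well-defined indexed by elements of S_∞. -/

import Mathlib

open MvPolynomial

noncomputable section

/-- The simple transposition `sᵢ` swapping `i` and `i+1` (we use it for `i ≥ 1`). -/
def simpT (i : ℕ) : Equiv.Perm ℕ := Equiv.swap i (i + 1)

/-- `w ∈ Sₙ`: the permutation `w` of the positive integers (with `0` as an artificial
fixed point) fixes `0` and every integer greater than `n`. -/
def IsPermOf (n : ℕ) (w : Equiv.Perm ℕ) : Prop := ∀ i, i = 0 ∨ n < i → w i = i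

/-- `w ∈ S_∞`: `w` fixes `0` and all but finitely many positive integers. -/
def FinPerm (w : Equiv.Perm ℕ) : Prop := ∃ n, IsPermOf n w

/-- Coxeter length: the number of inversions. -/
def len (w : Equiv.Perm ℕ) : ℕ := Set.ncard {p : ℕ × ℕ | p.1 < p.2 ∧ w p.2 < w p.1}

/-- The longest element of `Sₙ`, sending `i ↦ n+1-i` for `1 ≤ i ≤ n`. -/
def w0 (n : ℕ) : Equiv.Perm ℕ :=
  Function.Involutive.toPerm (fun i => if 1 ≤ i ∧ i ≤ n then n + 1 - i else i)
    (by intro i; dsimp only; split_ifs <;> omega)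

/-- The staircase monomial `x₁^(n-1) x₂^(n-2) ⋯ xₙ^0`. -/
def staircase (n : ℕ) : MvPolynomial ℕ ℤ := ∏ i ∈ Finset.Icc 1 n, X i ^ (n - i)

/-- The action of `sᵢ` on polynomials, swapping the variables `xᵢ` and `x_{i+1}`. -/
def swapVars (i : ℕ) (f : MvPolynomial ℕ ℤ) : MvPolynomial ℕ ℤ :=
  rename (Equiv.swap i (i + 1)) f

/-- The Newton divided difference operator `Nᵢ(f) = (f - sᵢ·f)/(xᵢ - x_{i+1})`.
(The numerator is always divisible by `xᵢ - x_{i+1}`, and the quotient is unique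
since we are in an integral domain; we extract it by choice.) -/
def divDiff (i : ℕ) (f : MvPolynomial ℕ ℤ) : MvPolynomial ℕ ℤ :=
  open Classical in
  if h : ∃ g, f - swapVars i f = (X i - X (i + 1)) * g then h.choose else 0

open Classical in
/-- Fuel-based recursion computing the Schubert polynomial of `w ∈ Sₙ`:
`𝔖_{w₀} = staircase n` and, if `i` is the least ascent of `w ≠ w₀`,
`𝔖_w = Nᵢ 𝔖_{w sᵢ}` (equivalently `𝔖_{w sᵢ} = Nᵢ 𝔖_w` when `w sᵢ < w`).
Fuel `n*n` always suffices. -/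
def SchubAux : ℕ → ℕ → Equiv.Perm ℕ → MvPolynomial ℕ ℤ
  | 0, n, w => if w = w0 n then staircase n else 0
  | (fuel + 1), n, w =>
      if w = w0 n then staircase n
      else if h : ∃ i, 1 ≤ i ∧ i < n ∧ w i < w (i + 1) then
        divDiff (Nat.find h) (SchubAux fuel n (w * simpT (Nat.find h)))
      else 0

/-- The Schubert polynomial of `w`, computed inside `Sₙ`. -/
def SchubertIn (n : ℕ) (w : Equiv.Perm ℕ) : MvPolynomial ℕ ℤ := SchubAux (n * n) n w

open Classical in
/-- The Schubert polynomial `𝔖_w` for `w ∈ S_∞` (and junk value `0` otherwise). -/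
def Schubert (w : Equiv.Perm ℕ) : MvPolynomial ℕ ℤ :=
  if h : FinPerm w then SchubertIn (Nat.find h) w else 0

/-- The isobaric operator `N̄ᵢ(f) = Nᵢ((1 - x_{i+1}) f)` for Grothendieck polynomials. -/
def divDiffBar (i : ℕ) (f : MvPolynomial ℕ ℤ) : MvPolynomial ℕ ℤ :=
  divDiff i ((1 - X (i + 1)) * f)

open Classical in
/-- Fuel-based recursion computing the Grothendieck polynomial of `w ∈ Sₙ`. -/
def GrothAux : ℕ → ℕ → Equiv.Perm ℕ → MvPolynomial ℕ ℤ
  | 0, n, w => if w = w0 n then staircase n else 0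
  | (fuel + 1), n, w =>
      if w = w0 n then staircase n
      else if h : ∃ i, 1 ≤ i ∧ i < n ∧ w i < w (i + 1) then
        divDiffBar (Nat.find h) (GrothAux fuel n (w * simpT (Nat.find h)))
      else 0

open Classical in
/-- The Grothendieck polynomial `𝔊_w` for `w ∈ S_∞`. -/
def Groth (w : Equiv.Perm ℕ) : MvPolynomial ℕ ℤ :=
  if h : FinPerm w then GrothAux (Nat.find h * Nat.find h) (Nat.find h) w else 0

/-- The β-isobaric operator `f ↦ Nᵢ((1 + β x_{i+1}) f)`, where the variable `x₀`
plays the role of `β`. -/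
def divDiffBeta (i : ℕ) (f : MvPolynomial ℕ ℤ) : MvPolynomial ℕ ℤ :=
  divDiff i ((1 + X 0 * X (i + 1)) * f)

open Classical in
/-- Fuel-based recursion computing the β-Grothendieck polynomial of `w ∈ Sₙ`,
with the variable `x₀` playing the role of `β`.  This agrees with
`𝔊_w^{(β)}(x) = (-β)^{-ℓ(w)} 𝔊_w(-βx)`. -/
def GrothBAux : ℕ → ℕ → Equiv.Perm ℕ → MvPolynomial ℕ ℤ
  | 0, n, w => if w = w0 n then staircase n else 0
  | (fuel + 1), n, w =>
      if w = w0 n then staircase n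
      else if h : ∃ i, 1 ≤ i ∧ i < n ∧ w i < w (i + 1) then
        divDiffBeta (Nat.find h) (GrothBAux fuel n (w * simpT (Nat.find h)))
      else 0

open Classical in
/-- The β-Grothendieck polynomial `𝔊_w^{(β)}` for `w ∈ S_∞`, with `x₀` as `β`. -/
def GrothB (w : Equiv.Perm ℕ) : MvPolynomial ℕ ℤ :=
  if h : FinPerm w then GrothBAux (Nat.find h * Nat.find h) (Nat.find h) w else 0

/-- The operator `∇ = ∑ᵢ ∂/∂xᵢ`. -/
def nabla (f : MvPolynomial ℕ ℤ) : MvPolynomial ℕ ℤ := ∑ᶠ i, pderiv i f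

/-- The Euler operator `E = ∑ᵢ xᵢ ∂/∂xᵢ`. -/
def euler (f : MvPolynomial ℕ ℤ) : MvPolynomial ℕ ℤ := ∑ᶠ i, X i * pderiv i f

/-- The operator `∇^β = ∑_{i≥1} ∂/∂xᵢ + β² ∂/∂β` (with `x₀` playing the role of `β`). -/
def nablaB (f : MvPolynomial ℕ ℤ) : MvPolynomial ℕ ℤ :=
  (∑ᶠ i ∈ {i : ℕ | 1 ≤ i}, pderiv i f) + X 0 ^ 2 * pderiv 0 f

/-- The descent set `Des(w) = {i ≥ 1 : w(i) > w(i+1)}`. -/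
def Des (w : Equiv.Perm ℕ) : Set ℕ := {i | 1 ≤ i ∧ w (i + 1) < w i}

/-- The major index `maj(w) = ∑_{i ∈ Des(w)} i`. -/
def maj (w : Equiv.Perm ℕ) : ℕ := ∑ᶠ i ∈ Des w, i

/-- The embedding `w ↦ 1 × w` with `(1×w)(i) = w(i-1) + 1` for `i ≥ 1`. -/
def oneTimes (w : Equiv.Perm ℕ) : Equiv.Perm ℕ where
  toFun i := if i = 0 then 0 else w (i - 1) + 1
  invFun i := if i = 0 then 0 else w⁻¹ (i - 1) + 1
  left_inv := by
    intro i
    cases i with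
    | zero => simp
    | succ j => simp
  right_inv := by
    intro i
    cases i with
    | zero => simp
    | succ j => simp

/-- Evaluation of a polynomial with all variables set to `1`. -/
def evalOne (f : MvPolynomial ℕ ℤ) : ℤ := MvPolynomial.eval (fun _ => (1 : ℤ)) f

/-- Left weak order: `a ≤_L b` iff `b = p a` with `ℓ(p) + ℓ(a) = ℓ(b)`. -/
def leL (a b : Equiv.Perm ℕ) : Prop := len (b * a⁻¹) + len a = len b

/-!
Computed in `Sₙ` and in `S_{n+1}`, the recursion for `𝔖_w` applies the same divided differences
`Nᵢ` (`i` the least ascent, which is `< n` in both) until `w` has become `w0 n`, where the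
`Sₙ`-computation stops with the staircase `x^δₙ`. In `S_{n+1}` it continues along the chain
`w0 n · sₙ sₙ₋₁ ⋯ s₁ = w0 (n + 1)`, whose Schubert polynomials are `x^δₙ · xₙ₋ₖ₊₁ ⋯ xₙ`: each
is `xₙ₋ₖ` times a polynomial symmetric in `xₙ₋ₖ, xₙ₋ₖ₊₁`, so `Nₙ₋ₖ` just removes that factor,
and the chain ends at `x^δₙ` again. Each step adds one inversion, which bounds the number of
steps and shows that the fuels `n²` and `(n + 1)²` suffice.
-/

open Finset

lemma X_sub_X_succ_ne_zero (i : ℕ) : (X i - X (i + 1) : MvPolynomial ℕ ℤ) ≠ 0 :=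
  sub_ne_zero.mpr fun h => by simpa using X_injective h

lemma divDiff_eq_of_sub_eq_mul {i : ℕ} {f g : MvPolynomial ℕ ℤ}
    (h : f - swapVars i f = (X i - X (i + 1)) * g) : divDiff i f = g := by
  have hex : ∃ g, f - swapVars i f = (X i - X (i + 1)) * g := ⟨g, h⟩
  rw [divDiff, dif_pos hex]
  exact mul_left_cancel₀ (X_sub_X_succ_ne_zero i) (hex.choose_spec.symm.trans h)

lemma divDiff_X_mul_of_swapVars_eq {i : ℕ} {g : MvPolynomial ℕ ℤ} (hg : swapVars i g = g) :
    divDiff i (X i * g) = g := by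
  apply divDiff_eq_of_sub_eq_mul
  rw [swapVars, map_mul, rename_X, Equiv.swap_apply_left, ← swapVars, hg]
  ring

lemma swapVars_prod_X_pow_of_eq {i : ℕ} {s : Finset ℕ} (hi : i ∈ s) (hi' : i + 1 ∈ s)
    {e : ℕ → ℕ} (he : e i = e (i + 1)) :
    swapVars i (∏ j ∈ s, X j ^ e j) = ∏ j ∈ s, X j ^ e j := by
  have he_swap : ∀ j, e (Equiv.swap i (i + 1) j) = e j := by
    intro j
    rcases eq_or_ne j i with rfl | h
    · rw [Equiv.swap_apply_left, he]
    rcases eq_or_ne j (i + 1) with rfl | h'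
    · rw [Equiv.swap_apply_right, he]
    · rw [Equiv.swap_apply_of_ne_of_ne h h']
  have hsupp : {j | Equiv.swap i (i + 1) j ≠ j} ⊆ s := fun j hj => by
    rcases Equiv.eq_or_eq_of_swap_apply_ne_self hj with rfl | rfl <;> assumption
  simp only [swapVars, map_prod, map_pow, rename_X]
  calc ∏ j ∈ s, X (Equiv.swap i (i + 1) j) ^ e j
      = ∏ j ∈ s, X (Equiv.swap i (i + 1) j) ^ e (Equiv.swap i (i + 1) j) := by
        simp only [he_swap]
    _ = ∏ j ∈ s, X j ^ e j := Equiv.Perm.prod_comp _ s (fun j => X j ^ e j) hsupp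

lemma w0_apply (n i : ℕ) : w0 n i = if 1 ≤ i ∧ i ≤ n then n + 1 - i else i := rfl

/-- `w0 n * sₙ * sₙ₋₁ ⋯ sₙ₋ₖ₊₁`, a saturated chain in `S_{n+1}` from `w0 n` up to `w0 (n + 1)`. -/
def w0Chain (n : ℕ) : ℕ → Equiv.Perm ℕ
  | 0 => w0 n
  | k + 1 => w0Chain n k * simpT (n - k)

lemma w0Chain_apply {n k : ℕ} (hk : k ≤ n) (i : ℕ) :
    w0Chain n k i =
      if 1 ≤ i ∧ i ≤ n - k then n + 1 - i
      else if i = n - k + 1 then n + 1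
      else if 1 ≤ i ∧ i ≤ n + 1 then n + 2 - i
      else i := by
  induction k generalizing i with
  | zero =>
    rw [w0Chain, w0_apply]
    split_ifs <;> omega
  | succ k ih =>
    rw [w0Chain, Equiv.Perm.mul_apply, ih (by omega), simpT, Equiv.swap_apply_def]
    split_ifs <;> omega

lemma w0Chain_self (n : ℕ) : w0Chain n n = w0 (n + 1) := by
  ext i
  rw [w0Chain_apply le_rfl, w0_apply]
  split_ifs <;> omega

def ascents (n : ℕ) (w : Equiv.Perm ℕ) : Set ℕ := {i | 1 ≤ i ∧ i < n ∧ w i < w (i + 1)}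

lemma w0Chain_ne_w0_succ {n k : ℕ} (hk : k < n) : w0Chain n k ≠ w0 (n + 1) := by
  intro h
  have := DFunLike.congr_fun h (n - k + 1)
  rw [w0Chain_apply hk.le, w0_apply] at this
  split_ifs at this <;> omega

lemma isLeast_ascents_w0Chain {n k : ℕ} (hk : k < n) :
    IsLeast (ascents (n + 1) (w0Chain n k)) (n - k) := by
  refine ⟨?_, fun j hj => ?_⟩ <;> simp only [ascents, Set.mem_ofPred_eq, w0Chain_apply hk.le] at *
  · split_ifs <;> omega
  · by_contra
    split_ifs at hj <;> omega

/-- The Schubert polynomial of `w0Chain n k` computed in `S_{n+1}`: the staircase monomial of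
`Sₙ` times `xₙ₋ₖ₊₁ ⋯ xₙ`. -/
def chainMonomial (n k : ℕ) : MvPolynomial ℕ ℤ :=
  ∏ j ∈ Icc 1 (n + 1), X j ^ (if j ≤ n - k then n - j else n + 1 - j)

lemma chainMonomial_zero (n : ℕ) : chainMonomial n 0 = staircase n := by
  rw [chainMonomial, staircase, prod_Icc_succ_top (by omega)]
  simp only [Nat.sub_zero, Nat.sub_self, pow_zero, mul_one, if_neg (Nat.not_succ_le_self n)]
  refine prod_congr rfl fun j hj => ?_
  rw [if_pos (mem_Icc.mp hj).2]

lemma chainMonomial_self (n : ℕ) : chainMonomial n n = staircase (n + 1) := by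
  refine prod_congr rfl fun j hj => ?_
  rw [Nat.sub_self, if_neg (by have := (mem_Icc.mp hj).1; omega)]

lemma chainMonomial_succ {n k : ℕ} (hk : k < n) :
    chainMonomial n (k + 1) = X (n - k) * chainMonomial n k := by
  have hmem : n - k ∈ Icc 1 (n + 1) := mem_Icc.mpr ⟨by omega, by omega⟩
  rw [chainMonomial, chainMonomial, ← mul_prod_erase _ _ hmem, ← mul_prod_erase _ _ hmem,
    ← mul_assoc, ← pow_succ']
  congr 1
  · congr 1
    split_ifs <;> omega
  · refine prod_congr rfl fun j hj => ?_
    have := mem_erase.mp hj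
    congr 1
    split_ifs <;> omega

lemma divDiff_chainMonomial_succ {n k : ℕ} (hk : k < n) :
    divDiff (n - k) (chainMonomial n (k + 1)) = chainMonomial n k := by
  rw [chainMonomial_succ hk]
  refine divDiff_X_mul_of_swapVars_eq (swapVars_prod_X_pow_of_eq ?_ ?_ ?_)
  · exact mem_Icc.mpr ⟨by omega, by omega⟩
  · exact mem_Icc.mpr ⟨by omega, by omega⟩
  · split_ifs <;> omega

lemma SchubAux_w0 (f n : ℕ) : SchubAux f n (w0 n) = staircase n := by
  cases f <;> simp [SchubAux]

lemma SchubAux_succ_of_isLeast {f n i : ℕ} {w : Equiv.Perm ℕ} (hw : w ≠ w0 n)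
    (hi : IsLeast (ascents n w) i) :
    SchubAux (f + 1) n w = divDiff i (SchubAux f n (w * simpT i)) := by
  have hex : ∃ j, 1 ≤ j ∧ j < n ∧ w j < w (j + 1) := ⟨i, hi.1⟩
  have hfind : Nat.find hex = i :=
    (Nat.find_eq_iff hex).mpr ⟨hi.1, fun j hj hj' => (hi.2 hj').not_gt hj⟩
  rw [SchubAux, if_neg hw, dif_pos hex, hfind]

lemma SchubAux_w0Chain {n k f : ℕ} (hk : k ≤ n) (hf : n - k ≤ f) :
    SchubAux f (n + 1) (w0Chain n k) = chainMonomial n k := by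
  induction f generalizing k with
  | zero =>
    obtain rfl : k = n := by omega
    rw [w0Chain_self, SchubAux_w0, chainMonomial_self]
  | succ f ih =>
    rcases hk.eq_or_lt with rfl | hk
    · rw [w0Chain_self, SchubAux_w0, chainMonomial_self]
    rw [SchubAux_succ_of_isLeast (w0Chain_ne_w0_succ hk) (isLeast_ascents_w0Chain hk),
      ← w0Chain, ih (by omega) (by omega), divDiff_chainMonomial_succ hk]

lemma SchubAux_succ_w0 {n f : ℕ} (hf : n ≤ f) : SchubAux f (n + 1) (w0 n) = staircase n := by
  rw [← chainMonomial_zero, ← SchubAux_w0Chain (Nat.zero_le n) (by omega), w0Chain]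

namespace IsPermOf

variable {n : ℕ} {w : Equiv.Perm ℕ}

lemma apply_mem_Icc (hw : IsPermOf n w) {i : ℕ} (hi : i ∈ Icc 1 n) : w i ∈ Icc 1 n := by
  obtain ⟨hi₁, hi₂⟩ := mem_Icc.mp hi
  refine mem_Icc.mpr ⟨Nat.one_le_iff_ne_zero.mpr fun h => ?_, not_lt.mp fun h => ?_⟩
  · exact absurd (w.injective (h.trans (hw 0 (Or.inl rfl)).symm)) (by omega)
  · exact absurd (w.injective (hw (w i) (Or.inr h))) (by omega)

lemma mul_simpT (hw : IsPermOf n w) {i : ℕ} (hi₁ : 1 ≤ i) (hi₂ : i < n) :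
    IsPermOf n (w * simpT i) := fun j hj => by
  rw [Equiv.Perm.mul_apply, simpT, Equiv.swap_apply_of_ne_of_ne (by omega) (by omega), hw j hj]

lemma add_le_of_forall_descent (hdes : ∀ i, 1 ≤ i → i < n → w (i + 1) < w i) {i : ℕ}
    (hi : 1 ≤ i) : ∀ d, i + d ≤ n → w (i + d) + d ≤ w i
  | 0, _ => le_rfl
  | d + 1, hd => by
    have := add_le_of_forall_descent hdes hi d (by omega)
    have := hdes (i + d) (by omega) (by omega)
    rw [← add_assoc i d 1]
    omega

lemma eq_w0_of_forall_descent (hw : IsPermOf n w)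
    (hdes : ∀ i, 1 ≤ i → i < n → w (i + 1) < w i) : w = w0 n := by
  ext i
  rw [w0_apply]
  split_ifs with hi
  · have h₁ := add_le_of_forall_descent hdes le_rfl (i - 1) (by omega)
    have h₂ := add_le_of_forall_descent hdes hi.1 (n - i) (by omega)
    have h₃ := mem_Icc.mp (hw.apply_mem_Icc (mem_Icc.mpr ⟨le_rfl, hi.1.trans hi.2⟩))
    have h₄ := mem_Icc.mp (hw.apply_mem_Icc (mem_Icc.mpr ⟨hi.1.trans hi.2, le_rfl⟩))
    rw [show 1 + (i - 1) = i by omega, show i + (n - i) = n by omega] at *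
    omega
  · exact hw i (by omega)

lemma exists_isLeast_ascents (hw : IsPermOf n w) (hne : w ≠ w0 n) :
    ∃ i, IsLeast (ascents n w) i := by
  have hasc : (ascents n w).Nonempty := by
    by_contra h
    refine hne (hw.eq_w0_of_forall_descent fun i hi₁ hi₂ => ?_)
    have hnasc : ¬ w i < w (i + 1) := fun hlt => h ⟨i, hi₁, hi₂, hlt⟩
    have hne' : w (i + 1) ≠ w i := fun heq => absurd (w.injective heq) (by omega)
    omega
  exact ⟨sInf (ascents n w), Nat.sInf_mem hasc, fun _ => Nat.sInf_le⟩

lemma ne_w0_succ (hw : IsPermOf n w) (hn : 1 ≤ n) : w ≠ w0 (n + 1) := fun h => by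
  have := DFunLike.congr_fun h (n + 1)
  rw [hw (n + 1) (Or.inr (by omega)), w0_apply, if_pos ⟨by omega, le_rfl⟩] at this
  omega

end IsPermOf

lemma isLeast_ascents_succ {n i : ℕ} {w : Equiv.Perm ℕ} (hi : IsLeast (ascents n w) i) :
    IsLeast (ascents (n + 1) w) i := by
  obtain ⟨⟨hi₁, hi₂, hi₃⟩, hmin⟩ := hi
  refine ⟨⟨hi₁, by omega, hi₃⟩, fun j ⟨hj₁, hj₂, hj₃⟩ => ?_⟩
  by_cases hjn : j < n
  · exact hmin ⟨hj₁, hjn, hj₃⟩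
  · omega

def inversions (n : ℕ) (w : Equiv.Perm ℕ) : Finset (ℕ × ℕ) :=
  (Icc 1 n ×ˢ Icc 1 n).filter fun p => p.1 < p.2 ∧ w p.2 < w p.1

lemma mem_inversions {n a b : ℕ} {w : Equiv.Perm ℕ} :
    (a, b) ∈ inversions n w ↔ (a ∈ Icc 1 n ∧ b ∈ Icc 1 n) ∧ a < b ∧ w b < w a := by
  rw [inversions, mem_filter, mem_product]

lemma inversions_mul_simpT {n i : ℕ} {w : Equiv.Perm ℕ} (hi₁ : 1 ≤ i) (hi₂ : i < n)
    (hasc : w i < w (i + 1)) :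
    inversions n (w * simpT i) =
      insert (i, i + 1)
        ((inversions n w).map (Equiv.prodCongr (simpT i) (simpT i)).toEmbedding) := by
  ext ⟨a, b⟩
  simp only [mem_insert, mem_map_equiv, Equiv.prodCongr_symm, Equiv.prodCongr_apply, Prod.map,
    mem_inversions, mem_Icc, Prod.mk.injEq, simpT, Equiv.symm_swap, Equiv.Perm.mul_apply,
    Equiv.swap_apply_def]
  split_ifs <;> subst_vars <;> omega

lemma card_inversions_mul_simpT {n i : ℕ} {w : Equiv.Perm ℕ} (hi₁ : 1 ≤ i) (hi₂ : i < n)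
    (hasc : w i < w (i + 1)) :
    (inversions n (w * simpT i)).card = (inversions n w).card + 1 := by
  rw [inversions_mul_simpT hi₁ hi₂ hasc, card_insert_of_notMem, card_map]
  rw [mem_map_equiv, Equiv.prodCongr_symm, Equiv.prodCongr_apply, Prod.map, simpT,
    Equiv.symm_swap, Equiv.swap_apply_left, Equiv.swap_apply_right, mem_inversions]
  omega

lemma inversions_subset_inversions_w0 (n : ℕ) (w : Equiv.Perm ℕ) :
    inversions n w ⊆ inversions n (w0 n) := fun ⟨a, b⟩ h => by
  rw [mem_inversions, mem_Icc, mem_Icc, w0_apply, w0_apply] at *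
  split_ifs <;> omega

lemma card_inversions_le (n : ℕ) (w : Equiv.Perm ℕ) : (inversions n w).card ≤ n * n := by
  calc (inversions n w).card ≤ (Icc 1 n ×ˢ Icc 1 n).card := card_filter_le _ _
    _ = n * n := by rw [card_product, Nat.card_Icc, Nat.add_sub_cancel]

lemma IsPermOf.card_inversions_lt_of_ne_w0 {n : ℕ} {w : Equiv.Perm ℕ} (hw : IsPermOf n w)
    (hne : w ≠ w0 n) : (inversions n w).card < (inversions n (w0 n)).card := by
  obtain ⟨i, ⟨hi₁, hi₂, hasc⟩, -⟩ := hw.exists_isLeast_ascents hne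
  have := card_le_card (inversions_subset_inversions_w0 n (w * simpT i))
  rw [card_inversions_mul_simpT hi₁ hi₂ hasc] at this
  omega

lemma SchubAux_succ_eq {n m f₁ f₂ : ℕ} {w : Equiv.Perm ℕ} (hw : IsPermOf n w)
    (hm : (inversions n w).card + m = (inversions n (w0 n)).card) (hf₁ : m ≤ f₁)
    (hf₂ : m + n ≤ f₂) : SchubAux f₂ (n + 1) w = SchubAux f₁ n w := by
  induction m generalizing w f₁ f₂ with
  | zero =>
    obtain rfl : w = w0 n := by_contra fun hne => (hw.card_inversions_lt_of_ne_w0 hne).ne hm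
    rw [SchubAux_w0, SchubAux_succ_w0 (by omega)]
  | succ m ih =>
    by_cases hw0 : w = w0 n
    · subst hw0
      rw [SchubAux_w0, SchubAux_succ_w0 (by omega)]
    obtain ⟨i, hi⟩ := hw.exists_isLeast_ascents hw0
    obtain ⟨hi₁, hi₂, hasc⟩ := hi.1
    obtain ⟨f₁, rfl⟩ : ∃ f, f₁ = f + 1 := ⟨f₁ - 1, by omega⟩
    obtain ⟨f₂, rfl⟩ : ∃ f, f₂ = f + 1 := ⟨f₂ - 1, by omega⟩
    rw [SchubAux_succ_of_isLeast hw0 hi,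
      SchubAux_succ_of_isLeast (hw.ne_w0_succ (by omega)) (isLeast_ascents_succ hi),
      ih (f₁ := f₁) (f₂ := f₂) (hw.mul_simpT hi₁ hi₂)
        (by rw [card_inversions_mul_simpT hi₁ hi₂ hasc]; omega) (by omega) (by omega)]

theorem schubert_stability
    (n : ℕ) (w : Equiv.Perm ℕ) (hw : IsPermOf n w) :
    SchubertIn (n + 1) w = SchubertIn n w := by
  have hle := card_le_card (inversions_subset_inversions_w0 n w)
  have hsq := card_inversions_le n (w0 n)
  have hsucc_sq : (n + 1) * (n + 1) = n * n + 2 * n + 1 := by ring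
  exact SchubAux_succ_eq hw (Nat.add_sub_of_le hle) (by omega) (by omega)

end
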